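/- arXiv:2511.13316 — 6 statements merged into one kernel-verified Lean document; each statement's English description precedes it below -/
import Mathlib

section
/- Let N ∈ ℤ³ with N₁ ≥ 1, let V be an admissible potential on Ω (extended by I₆ off Ω), and let u be a family of components (u₂^{E/H},u₃^{E/H} defined for n₁≥−1, u₁^{E/H} for n₁≥0) satisfying equations (R1)–(R6) at every n with 0 ≤ n₁ ≤ N₁−1. If u₂^{E/H} and u₃^{E/H} vanish at every m ∈ C⁻(N) with m₁ ∈ {−1,0}, and u₁^{E/H} vanishes at every m ∈ C⁻(N) with m₁=0, then u_j^{E/H}(N)=0 for j=1,2,3. -/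
/-! Common framework: discrete anisotropic Maxwell operator on a paving of ℤ³. -/

abbrev Z3 := ℤ × ℤ × ℤ
abbrev C3 := ℂ × ℂ × ℂ

def e1 : Z3 := (1, 0, 0)
def e2 : Z3 := (0, 1, 0)
def e3 : Z3 := (0, 0, 1)

/-- A family of six ℂ-valued components `u_j^{E/H}` (j = 1,2,3) on ℤ³. -/
structure Fam where
  E1 : Z3 → ℂ
  E2 : Z3 → ℂ
  E3 : Z3 → ℂ
  H1 : Z3 → ℂ
  H2 : Z3 → ℂ
  H3 : Z3 → ℂ

/-- A diagonal 6×6 complex potential `V = diag(V₁^E,V₂^E,V₃^E,V₁^H,V₂^H,V₃^H)`. -/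
structure Pot where
  E1 : Z3 → ℂ
  E2 : Z3 → ℂ
  E3 : Z3 → ℂ
  H1 : Z3 → ℂ
  H2 : Z3 → ℂ
  H3 : Z3 → ℂ

/-- `V(n)` is invertible (all diagonal entries nonzero) for `n` in the given set. -/
def PotInv (S : Set Z3) (V : Pot) : Prop :=
  ∀ n ∈ S, V.E1 n ≠ 0 ∧ V.E2 n ≠ 0 ∧ V.E3 n ≠ 0 ∧ V.H1 n ≠ 0 ∧ V.H2 n ≠ 0 ∧ V.H3 n ≠ 0

/-- `V(n) = I₆` off the given set. -/
def PotExt (S : Set Z3) (V : Pot) : Prop :=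
  ∀ n ∉ S, V.E1 n = 1 ∧ V.E2 n = 1 ∧ V.E3 n = 1 ∧ V.H1 n = 1 ∧ V.H2 n = 1 ∧ V.H3 n = 1

/-- Admissible potential on `S`, extended by the identity off `S`. -/
def PotAdm (S : Set Z3) (V : Pot) : Prop := PotInv S V ∧ PotExt S V

/-! The recursion equations (R1)–(R6) and the auxiliary equations (A1),(A2). -/

def eqR1 (V : Pot) (u : Fam) (n : Z3) : Prop :=
  u.E2 (n + e1) =
    2 * Complex.I * V.H3 n * u.H3 n + u.E1 (n + e2) - u.E1 (n - e2) + u.E2 (n - e1)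

def eqR2 (V : Pot) (u : Fam) (n : Z3) : Prop :=
  u.E3 (n + e1) =
    -(2 * Complex.I * V.H2 n * u.H2 n) + u.E1 (n + e3) - u.E1 (n - e3) + u.E3 (n - e1)

def eqR3 (V : Pot) (u : Fam) (n : Z3) : Prop :=
  u.H2 (n + e1) =
    -(2 * Complex.I * V.E3 n * u.E3 n) + u.H1 (n + e2) - u.H1 (n - e2) + u.H2 (n - e1)

def eqR4 (V : Pot) (u : Fam) (n : Z3) : Prop :=
  u.H3 (n + e1) =
    2 * Complex.I * V.E2 n * u.E2 n + u.H1 (n + e3) - u.H1 (n - e3) + u.H3 (n - e1)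

def eqR5 (V : Pot) (u : Fam) (n : Z3) : Prop :=
  u.E1 (n + e1) = (-(2 * Complex.I * V.E1 (n + e1)))⁻¹ *
    ((2 * Complex.I * V.E2 (n + e2) * u.E2 (n + e2)
        + 2 * Complex.I * V.E3 (n + e3) * u.E3 (n + e3)
        + u.H3 (n + e2 - e1) - u.H2 (n + e3 - e1))
      - (2 * Complex.I * V.E2 (n - e2) * u.E2 (n - e2)
        + 2 * Complex.I * V.E3 (n - e3) * u.E3 (n - e3)
        + u.H3 (n - e2 - e1) - u.H2 (n - e3 - e1)))

def eqR6 (V : Pot) (u : Fam) (n : Z3) : Prop :=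
  u.H1 (n + e1) = (2 * Complex.I * V.H1 (n + e1))⁻¹ *
    ((-(2 * Complex.I * V.H2 (n + e2) * u.H2 (n + e2))
        - 2 * Complex.I * V.H3 (n + e3) * u.H3 (n + e3)
        + u.E3 (n + e2 - e1) - u.E2 (n + e3 - e1))
      - (-(2 * Complex.I * V.H2 (n - e2) * u.H2 (n - e2))
        - 2 * Complex.I * V.H3 (n - e3) * u.H3 (n - e3)
        + u.E3 (n - e2 - e1) - u.E2 (n - e3 - e1)))

def eqA1 (V : Pot) (u : Fam) (n : Z3) : Prop :=
  u.E1 n = (-(2 * Complex.I * V.E1 n))⁻¹ *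
    (u.H3 (n + e2) - u.H3 (n - e2) - u.H2 (n + e3) + u.H2 (n - e3))

def eqA2 (V : Pot) (u : Fam) (n : Z3) : Prop :=
  u.H1 n = (2 * Complex.I * V.H1 n)⁻¹ *
    (u.E3 (n + e2) - u.E3 (n - e2) - u.E2 (n + e3) + u.E2 (n - e3))

/-- Equations (R1)–(R4) at `n`. -/
def ReqB (V : Pot) (u : Fam) (n : Z3) : Prop :=
  eqR1 V u n ∧ eqR2 V u n ∧ eqR3 V u n ∧ eqR4 V u n

/-- Equations (R1)–(R6) at `n`. -/
def Req (V : Pot) (u : Fam) (n : Z3) : Prop :=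
  ReqB V u n ∧ eqR5 V u n ∧ eqR6 V u n

/-! Geometry of the paving `Ω = [[1,R₁]]×[[1,R₂]]×[[1,R₃]]` (R packed as a triple). -/

def Omega (R : Z3) : Set Z3 :=
  {n | 1 ≤ n.1 ∧ n.1 ≤ R.1 ∧ 1 ≤ n.2.1 ∧ n.2.1 ≤ R.2.1 ∧ 1 ≤ n.2.2 ∧ n.2.2 ≤ R.2.2}

def bd1p (R : Z3) : Set Z3 :=
  {n | n.1 = R.1 + 1 ∧ 1 ≤ n.2.1 ∧ n.2.1 ≤ R.2.1 ∧ 1 ≤ n.2.2 ∧ n.2.2 ≤ R.2.2}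
def bd1m (R : Z3) : Set Z3 :=
  {n | n.1 = 0 ∧ 1 ≤ n.2.1 ∧ n.2.1 ≤ R.2.1 ∧ 1 ≤ n.2.2 ∧ n.2.2 ≤ R.2.2}
def bd2p (R : Z3) : Set Z3 :=
  {n | n.2.1 = R.2.1 + 1 ∧ 1 ≤ n.1 ∧ n.1 ≤ R.1 ∧ 1 ≤ n.2.2 ∧ n.2.2 ≤ R.2.2}
def bd2m (R : Z3) : Set Z3 :=
  {n | n.2.1 = 0 ∧ 1 ≤ n.1 ∧ n.1 ≤ R.1 ∧ 1 ≤ n.2.2 ∧ n.2.2 ≤ R.2.2}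
def bd3p (R : Z3) : Set Z3 :=
  {n | n.2.2 = R.2.2 + 1 ∧ 1 ≤ n.1 ∧ n.1 ≤ R.1 ∧ 1 ≤ n.2.1 ∧ n.2.1 ≤ R.2.1}
def bd3m (R : Z3) : Set Z3 :=
  {n | n.2.2 = 0 ∧ 1 ≤ n.1 ∧ n.1 ≤ R.1 ∧ 1 ≤ n.2.1 ∧ n.2.1 ≤ R.2.1}

def bd1 (R : Z3) : Set Z3 := bd1p R ∪ bd1m R
def bd2 (R : Z3) : Set Z3 := bd2p R ∪ bd2m R
def bd3 (R : Z3) : Set Z3 := bd3p R ∪ bd3m R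

/-- The boundary `∂Ω`. -/
def bd (R : Z3) : Set Z3 := bd1 R ∪ bd2 R ∪ bd3 R

/-- The outgoing normal `ν(n)` (correct on each face of `∂Ω`). -/
def nuv (R : Z3) (n : Z3) : Z3 :=
  if n.1 = 0 then (-1, 0, 0)
  else if n.1 = R.1 + 1 then (1, 0, 0)
  else if n.2.1 = 0 then (0, -1, 0)
  else if n.2.1 = R.2.1 + 1 then (0, 1, 0)
  else if n.2.2 = 0 then (0, 0, -1)
  else (0, 0, 1)

/-- The unique neighbour `m_Ω(n) ∈ Ω` of a boundary point `n`. -/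
def mOm (R : Z3) (n : Z3) : Z3 := n - nuv R n

/-! ℂ³ operations against integer vectors. -/

noncomputable def zdot (a : C3) (b : Z3) : ℂ :=
  a.1 * (b.1 : ℂ) + a.2.1 * (b.2.1 : ℂ) + a.2.2 * (b.2.2 : ℂ)

noncomputable def zsmul (c : ℂ) (b : Z3) : C3 :=
  (c * (b.1 : ℂ), c * (b.2.1 : ℂ), c * (b.2.2 : ℂ))

/-- Cross product `a ∧ b` of a ℂ³ vector with an integer vector. -/
noncomputable def zcross (a : C3) (b : Z3) : C3 :=
  (a.2.1 * (b.2.2 : ℂ) - a.2.2 * (b.2.1 : ℂ),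
   a.2.2 * (b.1 : ℂ) - a.1 * (b.2.2 : ℂ),
   a.1 * (b.2.1 : ℂ) - a.2.1 * (b.1 : ℂ))

def vecE (u : Fam) (n : Z3) : C3 := (u.E1 n, u.E2 n, u.E3 n)
def vecH (u : Fam) (n : Z3) : C3 := (u.H1 n, u.H2 n, u.H3 n)

/-- Tangential trace `u^E_tan(n)` at a boundary point. -/
noncomputable def tanE (R : Z3) (u : Fam) (n : Z3) : C3 :=
  vecE u n - zsmul (zdot (vecE u n) (nuv R n)) (nuv R n)

noncomputable def tanH (R : Z3) (u : Fam) (n : Z3) : C3 :=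
  vecH u n - zsmul (zdot (vecH u n) (nuv R n)) (nuv R n)

/-- Tangential derivative `∂_tan u^E(n) = (u(n) − u(m_Ω(n))) ∧ ν(n)`. -/
noncomputable def dtanE (R : Z3) (u : Fam) (n : Z3) : C3 :=
  zcross (vecE u n - vecE u (mOm R n)) (nuv R n)

noncomputable def dtanH (R : Z3) (u : Fam) (n : Z3) : C3 :=
  zcross (vecH u n - vecH u (mOm R n)) (nuv R n)

/-- The discrete rotational `M v = (2i)⁻¹ ∇ₘ × v`. -/
noncomputable def Mcurl (v1 v2 v3 : Z3 → ℂ) (n : Z3) : C3 :=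
  ((2 * Complex.I)⁻¹ * (-(v2 (n + e3) - v2 (n - e3)) + (v3 (n + e2) - v3 (n - e2))),
   (2 * Complex.I)⁻¹ * ((v1 (n + e3) - v1 (n - e3)) - (v3 (n + e1) - v3 (n - e1))),
   (2 * Complex.I)⁻¹ * (-(v1 (n + e2) - v1 (n - e2)) + (v2 (n + e1) - v2 (n - e1))))

/-- `u` solves the Maxwell system with potential `V` at `n`:
`M u^E = V^H u^H` and `M u^H = −V^E u^E`. -/
noncomputable def MaxwellAt (V : Pot) (u : Fam) (n : Z3) : Prop :=
  Mcurl u.E1 u.E2 u.E3 n = (V.H1 n * u.H1 n, V.H2 n * u.H2 n, V.H3 n * u.H3 n) ∧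
  Mcurl u.H1 u.H2 u.H3 n = (-(V.E1 n * u.E1 n), -(V.E2 n * u.E2 n), -(V.E3 n * u.E3 n))

/-! Membership in `H(Ω;ℂ⁶)`: components modelled as total functions; equality as
elements of `H(Ω;ℂ⁶)` is agreement of the `j`-th components on `Ω ∪ ⋃_{k≠j} ∂Ω_k`. -/

def dom1 (R : Z3) : Set Z3 := Omega R ∪ bd2 R ∪ bd3 R
def dom2 (R : Z3) : Set Z3 := Omega R ∪ bd1 R ∪ bd3 R
def dom3 (R : Z3) : Set Z3 := Omega R ∪ bd1 R ∪ bd2 R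

/-- `u = u'` as elements of `H(Ω;ℂ⁶)`. -/
def EqOnH (R : Z3) (u u' : Fam) : Prop :=
  (∀ n ∈ dom1 R, u.E1 n = u'.E1 n ∧ u.H1 n = u'.H1 n) ∧
  (∀ n ∈ dom2 R, u.E2 n = u'.E2 n ∧ u.H2 n = u'.H2 n) ∧
  (∀ n ∈ dom3 R, u.E3 n = u'.E3 n ∧ u.H3 n = u'.H3 n)

/-- Admissibility of boundary data on `Γ`: `f(n)·ν(n) = 0` on `Γ`. -/
noncomputable def AdmOn (R : Z3) (Γ : Set Z3) (f : Z3 → C3) : Prop :=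
  ∀ n ∈ Γ, zdot (f n) (nuv R n) = 0

/-! Cones and half-spaces. -/

def Cminus (N : Z3) : Set Z3 := {m | m.1 ≤ N.1 - |N.2.1 - m.2.1| - |N.2.2 - m.2.2|}
def Cplus (N : Z3) : Set Z3 := {m | N.1 + |N.2.1 - m.2.1| + |N.2.2 - m.2.2| ≤ m.1}
def Eminus (p : ℤ) : Set Z3 := {n | n.1 + n.2.1 < p}
def Eplus (p : ℤ) : Set Z3 := {n | p < n.1 + n.2.1}
def Ezero (p : ℤ) : Set Z3 := {n | n.1 + n.2.1 = p}

/-- `m'` is a lattice neighbour of `m`. -/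
def adj (m m' : Z3) : Prop :=
  m' = m + e1 ∨ m' = m - e1 ∨ m' = m + e2 ∨ m' = m - e2 ∨ m' = m + e3 ∨ m' = m - e3

/-! The special solution data. -/

/-- `ph τ p n = i^{n₃} e^{τ n₃} δ_p(n₂)`. -/
noncomputable def ph (τ : ℝ) (p : ℤ) (n : Z3) : ℂ :=
  Complex.I ^ n.2.2 * (Real.exp (τ * (n.2.2 : ℝ)) : ℂ) * (if n.2.1 = p then 1 else 0)

/-- `w` is the special solution associated with `V`, `τ`, `p`. -/
def SpecialSol (V : Pot) (τ : ℝ) (p : ℤ) (w : Fam) : Prop :=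
  (∀ n : Z3, n.1 = -1 → w.E2 n = 0 ∧ w.E3 n = 0 ∧ w.H2 n = 0 ∧ w.H3 n = 0) ∧
  (∀ n : Z3, n.1 = 0 →
      w.H1 n = ph τ p n ∧ w.H2 n = -ph τ p n ∧ w.E1 n = -ph τ p n ∧ w.E2 n = ph τ p n ∧
      w.E3 n = 0 ∧ w.H3 n = 0) ∧
  (∀ n : Z3, 0 ≤ n.1 → Req V w n)

/-- `A^s(n₁,p,n₃) = ∏_{j=-1}^{n₁} V₂^s(j-1,p-j+1,n₃) / V₁^s(j,p-j,n₃)`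
(the empty product, `= 1`, for `n₁ ≤ -2`). -/
noncomputable def Afun (V2 V1 : Z3 → ℂ) (p n1 n3 : ℤ) : ℂ :=
  ∏ j ∈ Finset.Icc (-1 : ℤ) n1, V2 (j - 1, p - j + 1, n3) / V1 (j, p - j, n3)

/-- `K^s_τ(n₁,p,n₃) = A^s(n₁,p,n₃+1) + e^{-2τ} A^s(n₁,p,n₃-1)`. -/
noncomputable def Kfun (V2 V1 : Z3 → ℂ) (τ : ℝ) (p n1 n3 : ℤ) : ℂ :=
  Afun V2 V1 p n1 (n3 + 1) + (Real.exp (-2 * τ) : ℂ) * Afun V2 V1 p n1 (n3 - 1)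

/-! Statement 6: if a solution of (R1)–(R6) vanishes on the initial slabs inside
the backward cone `C⁻(N)`, then it vanishes at `N`. -/

theorem statement6 (R : Z3) (hR : 1 ≤ R.1 ∧ 1 ≤ R.2.1 ∧ 1 ≤ R.2.2)
    (N : Z3) (hN : 1 ≤ N.1)
    (V : Pot) (hV : PotAdm (Omega R) V)
    (u : Fam)
    (hu : ∀ n : Z3, 0 ≤ n.1 → n.1 ≤ N.1 - 1 → Req V u n)
    (h23 : ∀ m ∈ Cminus N, m.1 = -1 ∨ m.1 = 0 →
      u.E2 m = 0 ∧ u.E3 m = 0 ∧ u.H2 m = 0 ∧ u.H3 m = 0)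
    (h1 : ∀ m ∈ Cminus N, m.1 = 0 → u.E1 m = 0 ∧ u.H1 m = 0) :
    u.E1 N = 0 ∧ u.E2 N = 0 ∧ u.E3 N = 0 ∧ u.H1 N = 0 ∧ u.H2 N = 0 ∧ u.H3 N = 0 := by
    -- induction on the slab level k
  have key : ∀ k : ℕ, (k : ℤ) ≤ N.1 → ∀ a b c : ℤ, ((a, b, c) : Z3) ∈ Cminus N →
      ((a = (k : ℤ) - 1 ∨ a = (k : ℤ)) →
        u.E2 (a, b, c) = 0 ∧ u.E3 (a, b, c) = 0 ∧ u.H2 (a, b, c) = 0 ∧ u.H3 (a, b, c) = 0) ∧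
      (a = (k : ℤ) → u.E1 (a, b, c) = 0 ∧ u.H1 (a, b, c) = 0) := by
    intro k
    induction k with
    | zero =>
      intro _ a b c hm
      exact ⟨fun h => h23 (a, b, c) hm (by omega), fun h => h1 (a, b, c) hm (by omega)⟩
    | succ k ih =>
      intro hk a b c hm
      have hk' : (k : ℤ) ≤ N.1 := by push_cast at hk; omega
      have IH := ih hk'
      have hmem : a ≤ N.1 - |N.2.1 - b| - |N.2.2 - c| := hm
      have c0 : ∀ a' b' c' : ℤ, a' + |b - b'| + |c - c'| ≤ a → ((a', b', c') : Z3) ∈ Cminus N := by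
        intro a' b' c' hle
        show a' ≤ N.1 - |N.2.1 - b'| - |N.2.2 - c'|
        have e2' : |N.2.1 - b'| ≤ |N.2.1 - b| + |b - b'| := by
          calc |N.2.1 - b'| = |(N.2.1 - b) + (b - b')| := by ring_nf
            _ ≤ _ := abs_add_le _ _
        have e3' : |N.2.2 - c'| ≤ |N.2.2 - c| + |c - c'| := by
          calc |N.2.2 - c'| = |(N.2.2 - c) + (c - c')| := by ring_nf
            _ ≤ _ := abs_add_le _ _
        linarith
      have habs0 : ∀ x : ℤ, |x - x| = 0 := by intro x; simp
      have habsp : ∀ x : ℤ, |x - (x + 1)| = 1 := by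
        intro x; rw [show x - (x + 1) = (-1 : ℤ) by ring]; norm_num
      have habsm : ∀ x : ℤ, |x - (x - 1)| = 1 := by
        intro x; rw [show x - (x - 1) = (1 : ℤ) by ring]; norm_num
      have main : a = (k : ℤ) + 1 →
          u.E1 (a, b, c) = 0 ∧ u.E2 (a, b, c) = 0 ∧ u.E3 (a, b, c) = 0 ∧
          u.H1 (a, b, c) = 0 ∧ u.H2 (a, b, c) = 0 ∧ u.H3 (a, b, c) = 0 := by
        intro ha
        -- memberships of all needed points
        have m10 : ((a - 1, b, c) : Z3) ∈ Cminus N := c0 _ _ _ (by rw [habs0, habs0]; omega)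
        have m20 : ((a - 2, b, c) : Z3) ∈ Cminus N := c0 _ _ _ (by rw [habs0, habs0]; omega)
        have m1bp : ((a - 1, b + 1, c) : Z3) ∈ Cminus N := c0 _ _ _ (by rw [habsp, habs0]; omega)
        have m1bm : ((a - 1, b - 1, c) : Z3) ∈ Cminus N := c0 _ _ _ (by rw [habsm, habs0]; omega)
        have m1cp : ((a - 1, b, c + 1) : Z3) ∈ Cminus N := c0 _ _ _ (by rw [habs0, habsp]; omega)
        have m1cm : ((a - 1, b, c - 1) : Z3) ∈ Cminus N := c0 _ _ _ (by rw [habs0, habsm]; omega)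
        have m2bp : ((a - 2, b + 1, c) : Z3) ∈ Cminus N := c0 _ _ _ (by rw [habsp, habs0]; omega)
        have m2bm : ((a - 2, b - 1, c) : Z3) ∈ Cminus N := c0 _ _ _ (by rw [habsm, habs0]; omega)
        have m2cp : ((a - 2, b, c + 1) : Z3) ∈ Cminus N := c0 _ _ _ (by rw [habs0, habsp]; omega)
        have m2cm : ((a - 2, b, c - 1) : Z3) ∈ Cminus N := c0 _ _ _ (by rw [habs0, habsm]; omega)
        -- zeros from induction hypothesis
        obtain ⟨z10E2, z10E3, z10H2, z10H3⟩ := (IH _ _ _ m10).1 (by omega)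
        obtain ⟨z10E1, z10H1⟩ := (IH _ _ _ m10).2 (by omega)
        obtain ⟨z20E2, z20E3, z20H2, z20H3⟩ := (IH _ _ _ m20).1 (by omega)
        obtain ⟨z1bpE2, z1bpE3, z1bpH2, z1bpH3⟩ := (IH _ _ _ m1bp).1 (by omega)
        obtain ⟨z1bpE1, z1bpH1⟩ := (IH _ _ _ m1bp).2 (by omega)
        obtain ⟨z1bmE2, z1bmE3, z1bmH2, z1bmH3⟩ := (IH _ _ _ m1bm).1 (by omega)
        obtain ⟨z1bmE1, z1bmH1⟩ := (IH _ _ _ m1bm).2 (by omega)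
        obtain ⟨z1cpE2, z1cpE3, z1cpH2, z1cpH3⟩ := (IH _ _ _ m1cp).1 (by omega)
        obtain ⟨z1cpE1, z1cpH1⟩ := (IH _ _ _ m1cp).2 (by omega)
        obtain ⟨z1cmE2, z1cmE3, z1cmH2, z1cmH3⟩ := (IH _ _ _ m1cm).1 (by omega)
        obtain ⟨z1cmE1, z1cmH1⟩ := (IH _ _ _ m1cm).2 (by omega)
        obtain ⟨z2bpE2, z2bpE3, z2bpH2, z2bpH3⟩ := (IH _ _ _ m2bp).1 (by omega)
        obtain ⟨z2bmE2, z2bmE3, z2bmH2, z2bmH3⟩ := (IH _ _ _ m2bm).1 (by omega)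
        obtain ⟨z2cpE2, z2cpE3, z2cpH2, z2cpH3⟩ := (IH _ _ _ m2cp).1 (by omega)
        obtain ⟨z2cmE2, z2cmE3, z2cmH2, z2cmH3⟩ := (IH _ _ _ m2cm).1 (by omega)
        -- the recursion at n = (a-1, b, c)
        have hreq := hu (a - 1, b, c) (by simp; omega) (by simp; omega)
        obtain ⟨⟨hr1, hr2, hr3, hr4⟩, hr5, hr6⟩ := hreq
        have pe1 : ∀ x y z : ℤ, ((x, y, z) : Z3) + e1 = (x + 1, y, z) := by
          intro x y z; simp [e1, Prod.ext_iff]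
        have me1 : ∀ x y z : ℤ, ((x, y, z) : Z3) - e1 = (x - 1, y, z) := by
          intro x y z; simp [e1, Prod.ext_iff]
        have pe2 : ∀ x y z : ℤ, ((x, y, z) : Z3) + e2 = (x, y + 1, z) := by
          intro x y z; simp [e2, Prod.ext_iff]
        have me2 : ∀ x y z : ℤ, ((x, y, z) : Z3) - e2 = (x, y - 1, z) := by
          intro x y z; simp [e2, Prod.ext_iff]
        have pe3 : ∀ x y z : ℤ, ((x, y, z) : Z3) + e3 = (x, y, z + 1) := by
          intro x y z; simp [e3, Prod.ext_iff]
        have me3 : ∀ x y z : ℤ, ((x, y, z) : Z3) - e3 = (x, y, z - 1) := by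
          intro x y z; simp [e3, Prod.ext_iff]
        have s1 : a - 1 + 1 = a := by ring
        have s2 : a - 1 - 1 = a - 2 := by ring
        simp only [eqR1, eqR2, eqR3, eqR4, eqR5, eqR6, pe1, me1, pe2, me2, pe3, me3, s1, s2]
          at hr1 hr2 hr3 hr4 hr5 hr6
        rw [z10H3, z1bpE1, z1bmE1, z20E2] at hr1
        rw [z10H2, z1cpE1, z1cmE1, z20E3] at hr2
        rw [z10E3, z1bpH1, z1bmH1, z20H2] at hr3
        rw [z10E2, z1cpH1, z1cmH1, z20H3] at hr4
        rw [z1bpE2, z1cpE3, z2bpH3, z2cpH2, z1bmE2, z1cmE3, z2bmH3, z2cmH2] at hr5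
        rw [z1bpH2, z1cpH3, z2bpE3, z2cpE2, z1bmH2, z1cmH3, z2bmE3, z2cmE2] at hr6
        refine ⟨by simpa using hr5, by simpa using hr1, by simpa using hr2,
          by simpa using hr6, by simpa using hr3, by simpa using hr4⟩
      refine ⟨?_, ?_⟩
      · rintro (h | h)
        · exact (IH a b c hm).1 (Or.inr (by omega))
        · obtain ⟨_, h2, h3, _, h5, h6⟩ := main (by omega)
          exact ⟨h2, h3, h5, h6⟩
      · intro h
        obtain ⟨h1', _, _, h4', _, _⟩ := main (by omega)
        exact ⟨h1', h4'⟩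
  have hNmem : ((N.1, N.2.1, N.2.2) : Z3) ∈ Cminus N := by
    show N.1 ≤ N.1 - |N.2.1 - N.2.1| - |N.2.2 - N.2.2|
    simp
  have hfin := key N.1.toNat (by omega) N.1 N.2.1 N.2.2 hNmem
  have hcast : ((N.1.toNat : ℤ)) = N.1 := Int.toNat_of_nonneg (by omega)
  obtain ⟨hE2, hE3, hH2, hH3⟩ := hfin.1 (Or.inr hcast.symm)
  obtain ⟨hE1, hH1⟩ := hfin.2 hcast.symm
  exact ⟨hE1, hE2, hE3, hH1, hH2, hH3⟩
end

section
/- Let p ∈ ℤ, let V be an admissible potential on Ω (extended by I₆ off Ω), and let u be a family of components (u₂^{E/H},u₃^{E/H} defined for n₁≥−1, u₁^{E/H} for n₁≥0) satisfying equations (R1)–(R6) at every n with n₁ ≥ 0. Assume: u₂^{E/H}(n)=0 whenever n₁=−1 and n₂≤p, and whenever n₁=0 and n₂≤p−1; u₃^{E/H}(n)=0 whenever n₁∈{−1,0}; and u₁^{E/H}(n)=0 whenever n₁=0 and n₂≤p−1. Then all components of u vanish at every n ∈ E⁻(p) with n₁ ≥ 0 (and u₂^{E/H},u₃^{E/H}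 also vanish at every n ∈ E⁻(p) with n₁=−1). -/
/-! Statement 7 (Corollary 2.5): vanishing of solutions of (R1)–(R6) in the
half-space `E⁻(p) = {n₁+n₂ < p}`. -/

lemma statement7_key (V : Pot) (p : ℤ) (u : Fam)
    (hu : ∀ n : Z3, 0 ≤ n.1 → Req V u n)
    (h2m : ∀ n : Z3, n.1 = -1 → n.2.1 ≤ p → u.E2 n = 0 ∧ u.H2 n = 0)
    (h20 : ∀ n : Z3, n.1 = 0 → n.2.1 ≤ p - 1 → u.E2 n = 0 ∧ u.H2 n = 0)
    (h3 : ∀ n : Z3, n.1 = -1 ∨ n.1 = 0 → u.E3 n = 0 ∧ u.H3 n = 0)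
    (h1 : ∀ n : Z3, n.1 = 0 → n.2.1 ≤ p - 1 → u.E1 n = 0 ∧ u.H1 n = 0) :
    ∀ k : ℕ, ∀ n : Z3, n.1 = (k : ℤ) - 1 → n.1 + n.2.1 < p →
      (u.E2 n = 0 ∧ u.E3 n = 0 ∧ u.H2 n = 0 ∧ u.H3 n = 0) ∧
      (1 ≤ k → u.E1 n = 0 ∧ u.H1 n = 0) := by
  intro k
  induction k using Nat.strong_induction_on with
  | _ k IH =>
    match k with
    | 0 =>
      intro n hn hnp
      have hn' : n.1 = -1 := by push_cast at hn; omega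
      have hb : n.2.1 ≤ p := by omega
      exact ⟨⟨(h2m n hn' hb).1, (h3 n (Or.inl hn')).1, (h2m n hn' hb).2,
        (h3 n (Or.inl hn')).2⟩, fun h => absurd h (by omega)⟩
    | 1 =>
      intro n hn hnp
      have hn' : n.1 = 0 := by push_cast at hn; omega
      have hb : n.2.1 ≤ p - 1 := by omega
      exact ⟨⟨(h20 n hn' hb).1, (h3 n (Or.inr hn')).1, (h20 n hn' hb).2,
        (h3 n (Or.inr hn')).2⟩, fun _ => h1 n hn' hb⟩
    | (k + 2) =>
      rintro ⟨a, b, c⟩ hn hnp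
      dsimp only at hn hnp
      have ha : a = (k : ℤ) + 1 := by push_cast at hn; omega
      have hb : b ≤ p - (k : ℤ) - 2 := by omega
      -- all components vanish at level a - 1 = k
      have P1 : ∀ b' c' : ℤ, b' ≤ b + 1 →
          u.E1 (a - 1, b', c') = 0 ∧ u.E2 (a - 1, b', c') = 0 ∧ u.E3 (a - 1, b', c') = 0 ∧
          u.H1 (a - 1, b', c') = 0 ∧ u.H2 (a - 1, b', c') = 0 ∧ u.H3 (a - 1, b', c') = 0 := by
        intro b' c' hb'
        have h := IH (k + 1) (by omega) (a - 1, b', c')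
          (by dsimp only; push_cast; omega) (by dsimp only; omega)
        exact ⟨(h.2 (by omega)).1, h.1.1, h.1.2.1, (h.2 (by omega)).2, h.1.2.2.1, h.1.2.2.2⟩
      -- tangential components vanish at level a - 1 - 1 = k - 1
      have P0 : ∀ b' c' : ℤ, b' ≤ b + 1 →
          u.E2 (a - 1 - 1, b', c') = 0 ∧ u.E3 (a - 1 - 1, b', c') = 0 ∧
          u.H2 (a - 1 - 1, b', c') = 0 ∧ u.H3 (a - 1 - 1, b', c') = 0 := by
        intro b' c' hb'
        exact (IH k (by omega) (a - 1 - 1, b', c')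
          (by dsimp only; push_cast; omega) (by dsimp only; omega)).1
      obtain ⟨⟨r1, r2, r3, r4⟩, r5, r6⟩ := hu ((a : ℤ) - 1, b, c) (by dsimp only; omega)
      simp only [eqR1, eqR2, eqR3, eqR4, eqR5, eqR6, e1, e2, e3, Prod.mk_add_mk,
        Prod.mk_sub_mk, add_zero, sub_zero, zero_add, zero_sub, sub_add_cancel]
        at r1 r2 r3 r4 r5 r6
      refine ⟨⟨?_, ?_, ?_, ?_⟩, fun _ => ⟨?_, ?_⟩⟩
      · rw [r1, (P1 b c (by omega)).2.2.2.2.2, (P1 (b + 1) c (by omega)).1,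
          (P1 (b - 1) c (by omega)).1, (P0 b c (by omega)).1]; ring
      · rw [r2, (P1 b c (by omega)).2.2.2.2.1, (P1 b (c + 1) (by omega)).1,
          (P1 b (c - 1) (by omega)).1, (P0 b c (by omega)).2.1]; ring
      · rw [r3, (P1 b c (by omega)).2.2.1, (P1 (b + 1) c (by omega)).2.2.2.1,
          (P1 (b - 1) c (by omega)).2.2.2.1, (P0 b c (by omega)).2.2.1]; ring
      · rw [r4, (P1 b c (by omega)).2.1, (P1 b (c + 1) (by omega)).2.2.2.1,
          (P1 b (c - 1) (by omega)).2.2.2.1, (P0 b c (by omega)).2.2.2]; ring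
      · rw [r5, (P1 (b + 1) c (by omega)).2.1, (P1 b (c + 1) (by omega)).2.2.1,
          (P0 (b + 1) c (by omega)).2.2.2, (P0 b (c + 1) (by omega)).2.2.1,
          (P1 (b - 1) c (by omega)).2.1, (P1 b (c - 1) (by omega)).2.2.1,
          (P0 (b - 1) c (by omega)).2.2.2, (P0 b (c - 1) (by omega)).2.2.1]; ring
      · rw [r6, (P1 (b + 1) c (by omega)).2.2.2.2.1, (P1 b (c + 1) (by omega)).2.2.2.2.2,
          (P0 (b + 1) c (by omega)).2.1, (P0 b (c + 1) (by omega)).1,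
          (P1 (b - 1) c (by omega)).2.2.2.2.1, (P1 b (c - 1) (by omega)).2.2.2.2.2,
          (P0 (b - 1) c (by omega)).2.1, (P0 b (c - 1) (by omega)).1]; ring

theorem statement7' (R : Z3) (hR : 1 ≤ R.1 ∧ 1 ≤ R.2.1 ∧ 1 ≤ R.2.2)
    (V : Pot) (hV : PotAdm (Omega R) V) (p : ℤ)
    (u : Fam)
    (hu : ∀ n : Z3, 0 ≤ n.1 → Req V u n)
    (h2m : ∀ n : Z3, n.1 = -1 → n.2.1 ≤ p → u.E2 n = 0 ∧ u.H2 n = 0)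
    (h20 : ∀ n : Z3, n.1 = 0 → n.2.1 ≤ p - 1 → u.E2 n = 0 ∧ u.H2 n = 0)
    (h3 : ∀ n : Z3, n.1 = -1 ∨ n.1 = 0 → u.E3 n = 0 ∧ u.H3 n = 0)
    (h1 : ∀ n : Z3, n.1 = 0 → n.2.1 ≤ p - 1 → u.E1 n = 0 ∧ u.H1 n = 0) :
    (∀ n ∈ Eminus p, 0 ≤ n.1 →
      u.E1 n = 0 ∧ u.E2 n = 0 ∧ u.E3 n = 0 ∧ u.H1 n = 0 ∧ u.H2 n = 0 ∧ u.H3 n = 0) ∧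
    (∀ n ∈ Eminus p, n.1 = -1 →
      u.E2 n = 0 ∧ u.E3 n = 0 ∧ u.H2 n = 0 ∧ u.H3 n = 0) := by
  have key := statement7_key V p u hu h2m h20 h3 h1
  constructor
  · intro n hmem h0
    have hmem' : n.1 + n.2.1 < p := hmem
    have hk : ((n.1 + 1).toNat : ℤ) = n.1 + 1 := Int.toNat_of_nonneg (by omega)
    have h := key (n.1 + 1).toNat n (by omega) hmem'
    have h2 := h.2 (by omega)
    exact ⟨h2.1, h.1.1, h.1.2.1, h2.2, h.1.2.2.1, h.1.2.2.2⟩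
  · intro n hmem hm1
    have hmem' : n.1 + n.2.1 < p := hmem
    exact (key 0 n (by omega) hmem').1

theorem statement7 (R : Z3) (hR : 1 ≤ R.1 ∧ 1 ≤ R.2.1 ∧ 1 ≤ R.2.2)
    (V : Pot) (hV : PotAdm (Omega R) V) (p : ℤ)
    (u : Fam)
    (hu : ∀ n : Z3, 0 ≤ n.1 → Req V u n)
    (h2m : ∀ n : Z3, n.1 = -1 → n.2.1 ≤ p → u.E2 n = 0 ∧ u.H2 n = 0)
    (h20 : ∀ n : Z3, n.1 = 0 → n.2.1 ≤ p - 1 → u.E2 n = 0 ∧ u.H2 n = 0)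
    (h3 : ∀ n : Z3, n.1 = -1 ∨ n.1 = 0 → u.E3 n = 0 ∧ u.H3 n = 0)
    (h1 : ∀ n : Z3, n.1 = 0 → n.2.1 ≤ p - 1 → u.E1 n = 0 ∧ u.H1 n = 0) :
    (∀ n ∈ Eminus p, 0 ≤ n.1 →
      u.E1 n = 0 ∧ u.E2 n = 0 ∧ u.E3 n = 0 ∧ u.H1 n = 0 ∧ u.H2 n = 0 ∧ u.H3 n = 0) ∧
    (∀ n ∈ Eminus p, n.1 = -1 →
      u.E2 n = 0 ∧ u.E3 n = 0 ∧ u.H2 n = 0 ∧ u.H3 n = 0) := by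
  exact statement7' R hR V hV p u hu h2m h20 h3 h1
end

section
/- Let V be an admissible potential on Ω (extended by I₆ off Ω), τ>0, p ∈ ℤ, and let w be the associated special solution. Then: (i) all components of w vanish at every n ∈ E⁻(p) in their domain of definition (i.e. w₁^{E/H}(n)=0 for n∈E⁻(p) with n₁≥0 and w₂^{E/H}(n)=w₃^{E/H}(n)=0 for n∈E⁻(p) with n₁≥−1); and (ii) w₃^E(n)=w₃^H(n)=0 for every n ∈ E₀(p) with n₁ ≥ 0. -/
/-! Statement 10: the special solution `w` vanishes on `E⁻(p)` (on its domain of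
definition) and `w₃^{E/H} = 0` on `E₀(p) ∩ {n₁ ≥ 0}`. -/

lemma key10 (V : Pot) (τ : ℝ) (p : ℤ) (w : Fam) (hw : SpecialSol V τ p w) :
    ∀ t : ℕ, ∀ a b c : ℤ, a = (t : ℤ) - 1 →
      (a + b < p →
        (0 ≤ a → w.E1 (a, b, c) = 0 ∧ w.H1 (a, b, c) = 0) ∧
        w.E2 (a, b, c) = 0 ∧ w.E3 (a, b, c) = 0 ∧ w.H2 (a, b, c) = 0 ∧ w.H3 (a, b, c) = 0) ∧
      (a + b = p → 0 ≤ a → w.E3 (a, b, c) = 0 ∧ w.H3 (a, b, c) = 0) := by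
  intro t
  induction t using Nat.strong_induction_on with
  | _ t ih =>
    match t with
    | 0 =>
      intro a b c ha
      have h0 := hw.1 (a, b, c) (by omega)
      exact ⟨fun _ => ⟨fun h' => absurd h' (by omega), h0.1, h0.2.1, h0.2.2.1, h0.2.2.2⟩,
        fun _ h' => absurd h' (by omega)⟩
    | 1 =>
      intro a b c ha
      have h0 := hw.2.1 (a, b, c) (by omega)
      constructor
      · intro hlt
        have hph : ph τ p (a, b, c) = 0 := by
          simp [ph, show b ≠ p by omega]
        refine ⟨fun _ => ⟨?_, ?_⟩, ?_, h0.2.2.2.2.1, ?_, h0.2.2.2.2.2⟩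
        · rw [h0.2.2.1, hph, neg_zero]
        · rw [h0.1, hph]
        · rw [h0.2.2.2.1, hph]
        · rw [h0.2.1, hph, neg_zero]
      · exact fun _ _ => ⟨h0.2.2.2.2.1, h0.2.2.2.2.2⟩
    | (s + 2) =>
      intro a b c ha
      have ha' : a = (s : ℤ) + 1 := by omega
      subst ha'
      have L : ∀ y z : ℤ, (s : ℤ) + y < p →
          w.E1 ((s : ℤ), y, z) = 0 ∧ w.H1 ((s : ℤ), y, z) = 0 ∧ w.E2 ((s : ℤ), y, z) = 0 ∧
          w.E3 ((s : ℤ), y, z) = 0 ∧ w.H2 ((s : ℤ), y, z) = 0 ∧ w.H3 ((s : ℤ), y, z) = 0 := by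
        intro y z hy
        obtain ⟨k1, k2, k3, k4, k5⟩ :=
          (ih (s + 1) (by omega) (s : ℤ) y z (by push_cast; ring)).1 hy
        exact ⟨(k1 (by omega)).1, (k1 (by omega)).2, k2, k3, k4, k5⟩
      have L' : ∀ y z : ℤ, (s : ℤ) - 1 + y < p →
          w.E2 ((s : ℤ) - 1, y, z) = 0 ∧ w.E3 ((s : ℤ) - 1, y, z) = 0 ∧
          w.H2 ((s : ℤ) - 1, y, z) = 0 ∧ w.H3 ((s : ℤ) - 1, y, z) = 0 := by
        intro y z hy
        have h := (ih s (by omega) ((s : ℤ) - 1) y z rfl).1 hy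
        exact ⟨h.2.1, h.2.2.1, h.2.2.2.1, h.2.2.2.2⟩
      obtain ⟨⟨h1, h2, h3, h4⟩, h5, h6⟩ :=
        hw.2.2 ((s : ℤ), b, c) (by exact Int.natCast_nonneg s)
      simp only [eqR1, eqR2, eqR3, eqR4, eqR5, eqR6, e1, e2, e3, Prod.mk_add_mk,
        Prod.mk_sub_mk, add_zero, sub_zero] at h1 h2 h3 h4 h5 h6
      constructor
      · intro hlt
        refine ⟨fun _ => ⟨?_, ?_⟩, ?_, ?_, ?_, ?_⟩
        · rw [h5, (L (b + 1) c (by omega)).2.2.1, (L b (c + 1) (by omega)).2.2.2.1,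
            (L' (b + 1) c (by omega)).2.2.2, (L' b (c + 1) (by omega)).2.2.1,
            (L (b - 1) c (by omega)).2.2.1, (L b (c - 1) (by omega)).2.2.2.1,
            (L' (b - 1) c (by omega)).2.2.2, (L' b (c - 1) (by omega)).2.2.1]
          ring
        · rw [h6, (L (b + 1) c (by omega)).2.2.2.2.1, (L b (c + 1) (by omega)).2.2.2.2.2,
            (L' (b + 1) c (by omega)).2.1, (L' b (c + 1) (by omega)).1,
            (L (b - 1) c (by omega)).2.2.2.2.1, (L b (c - 1) (by omega)).2.2.2.2.2,
            (L' (b - 1) c (by omega)).2.1, (L' b (c - 1) (by omega)).1]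
          ring
        · rw [h1, (L b c (by omega)).2.2.2.2.2, (L (b + 1) c (by omega)).1,
            (L (b - 1) c (by omega)).1, (L' b c (by omega)).1]
          ring
        · rw [h2, (L b c (by omega)).2.2.2.2.1, (L b (c + 1) (by omega)).1,
            (L b (c - 1) (by omega)).1, (L' b c (by omega)).2.1]
          ring
        · rw [h3, (L b c (by omega)).2.2.2.1, (L (b + 1) c (by omega)).2.1,
            (L (b - 1) c (by omega)).2.1, (L' b c (by omega)).2.2.1]
          ring
        · rw [h4, (L b c (by omega)).2.2.1, (L b (c + 1) (by omega)).2.1,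
            (L b (c - 1) (by omega)).2.1, (L' b c (by omega)).2.2.2]
          ring
      · intro heq _
        constructor
        · rw [h2, (L b c (by omega)).2.2.2.2.1, (L b (c + 1) (by omega)).1,
            (L b (c - 1) (by omega)).1, (L' b c (by omega)).2.1]
          ring
        · rw [h4, (L b c (by omega)).2.2.1, (L b (c + 1) (by omega)).2.1,
            (L b (c - 1) (by omega)).2.1, (L' b c (by omega)).2.2.2]
          ring

theorem statement10 (R : Z3) (hR : 1 ≤ R.1 ∧ 1 ≤ R.2.1 ∧ 1 ≤ R.2.2)
    (V : Pot) (hV : PotAdm (Omega R) V) (τ : ℝ) (hτ : 0 < τ) (p : ℤ)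
    (w : Fam) (hw : SpecialSol V τ p w) :
    (∀ n ∈ Eminus p, 0 ≤ n.1 → w.E1 n = 0 ∧ w.H1 n = 0) ∧
    (∀ n ∈ Eminus p, -1 ≤ n.1 →
      w.E2 n = 0 ∧ w.E3 n = 0 ∧ w.H2 n = 0 ∧ w.H3 n = 0) ∧
    (∀ n ∈ Ezero p, 0 ≤ n.1 → w.E3 n = 0 ∧ w.H3 n = 0) := by
  refine ⟨?_, ?_, ?_⟩
  · rintro ⟨a, b, c⟩ hn h0
    have h := key10 V τ p w hw (a + 1).toNat a b c (by omega)
    have hlt : a + b < p := hn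
    exact (h.1 hlt).1 h0
  · rintro ⟨a, b, c⟩ hn h0
    have h := key10 V τ p w hw (a + 1).toNat a b c (by omega)
    have hlt : a + b < p := hn
    exact ⟨(h.1 hlt).2.1, (h.1 hlt).2.2.1, (h.1 hlt).2.2.2.1, (h.1 hlt).2.2.2.2⟩
  · rintro ⟨a, b, c⟩ hn h0
    have h := key10 V τ p w hw (a + 1).toNat a b c (by omega)
    have heq : a + b = p := hn
    exact h.2 heq h0
end

section
/- Let V be an admissible potential on Ω (extended by I₆ off Ω), τ>0, p ∈ ℤ, and let w be the associated special solution. Then w solves the Maxwell system at every n with n₁ ≥ 1: (Mw^E)(n)=V^H(n)w^H(n) and (Mw^H)(n)=−V^E(n)w^E(n), where M v=(2i)⁻¹(−D₃v₂+D₂v₃, D₃v₁−D₁v₃, −D₂v₁+D₁v₂) with D_j v_k(n)=v_k(n+e_j)−v_k(n−e_j). -/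
/-! Statement 11: the special solution `w` solves the Maxwell system
`M w^E = V^H w^H`, `M w^H = −V^E w^E` at every `n` with `n₁ ≥ 1`. -/

theorem statement11 (R : Z3) (hR : 1 ≤ R.1 ∧ 1 ≤ R.2.1 ∧ 1 ≤ R.2.2)
    (V : Pot) (hV : PotAdm (Omega R) V) (τ : ℝ) (hτ : 0 < τ) (p : ℤ)
    (w : Fam) (hw : SpecialSol V τ p w) :
    ∀ n : Z3, 1 ≤ n.1 → MaxwellAt V w n := by
  obtain ⟨hVinv, hVext⟩ := hV
  obtain ⟨hinit1, hinit0, hreq⟩ := hw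
  intro n hn
  have hE1 : V.E1 n ≠ 0 := by
    by_cases h : n ∈ Omega R
    · exact (hVinv n h).1
    · simp [(hVext n h).1]
  have hH1 : V.H1 n ≠ 0 := by
    by_cases h : n ∈ Omega R
    · exact (hVinv n h).2.2.2.1
    · simp [(hVext n h).2.2.2.1]
  obtain ⟨a, b, c⟩ := n
  simp only at hn
  obtain ⟨⟨r1n, r2n, r3n, r4n⟩, -, -⟩ := hreq (a, b, c) (by omega)
  obtain ⟨-, r5m, r6m⟩ := hreq (a - 1, b, c) (by simp; omega)
  obtain ⟨⟨-, r2p2, -, r4p2⟩, -, -⟩ := hreq (a - 1, b + 1, c) (by simp; omega)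
  obtain ⟨⟨-, r2m2, -, r4m2⟩, -, -⟩ := hreq (a - 1, b - 1, c) (by simp; omega)
  obtain ⟨⟨r1p3, -, r3p3, -⟩, -, -⟩ := hreq (a - 1, b, c + 1) (by simp; omega)
  obtain ⟨⟨r1m3, -, r3m3, -⟩, -, -⟩ := hreq (a - 1, b, c - 1) (by simp; omega)
  simp only [eqR1, eqR2, eqR3, eqR4, eqR5, eqR6, e1, e2, e3, Prod.mk_add_mk,
    Prod.mk_sub_mk, add_zero, sub_zero, sub_add_cancel] at r1n r2n r3n r4n r5m r6m r2p2 r4p2 r2m2 r4m2 r1p3 r3p3 r1m3 r3m3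
  have hcH : (2 * Complex.I * V.H1 (a, b, c)) ≠ 0 := by
    exact mul_ne_zero (mul_ne_zero two_ne_zero Complex.I_ne_zero) hH1
  have hcE : (-(2 * Complex.I * V.E1 (a, b, c))) ≠ 0 := by
    exact neg_ne_zero.mpr (mul_ne_zero (mul_ne_zero two_ne_zero Complex.I_ne_zero) hE1)
  have r6m' := r6m
  rw [eq_comm, inv_mul_eq_iff_eq_mul₀ hcH] at r6m'
  have r5m' := r5m
  rw [eq_comm, inv_mul_eq_iff_eq_mul₀ hcE] at r5m'
  have h2I : (2 * Complex.I : ℂ) ≠ 0 := mul_ne_zero two_ne_zero Complex.I_ne_zero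
  constructor <;>
    simp only [Mcurl, e1, e2, e3, Prod.mk_add_mk, Prod.mk_sub_mk, add_zero, sub_zero,
      Prod.mk.injEq] <;> refine ⟨?_, ?_, ?_⟩ <;> rw [inv_mul_eq_iff_eq_mul₀ h2I]
  · linear_combination r2p2 - r1p3 - r2m2 + r1m3 + r6m'
  · linear_combination -r2n
  · linear_combination r1n
  · linear_combination r4p2 - r3p3 - r4m2 + r3m3 + r5m'
  · linear_combination -r4n
  · linear_combination r3n
end

section
/- Let V be an admissible potential on Ω (extended by I₆ off Ω), τ>0, p ∈ ℤ, and let w be the associated special solution. Then for every n ∈ E₀(p+1) with n₁ ≥ 1: w₃^E(n) = −2iV₂^H(n−e₁)w₂^H(n−e₁) + w₁^E(n−e₁+e₃) − w₁^E(n−e₁−e₃), and w₃^H(n) = 2iV₂^E(n−e₁)w₂^E(n−e₁) + w₁^H(n−e₁+e₃) − w₁^H(n−e₁−e₃). -/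
/-! Statement 14 (rel. (2.16) for `w`): on `E₀(p+1) ∩ {n₁ ≥ 1}`,
`w₃^E(n) = −2iV₂^H(n−e₁)w₂^H(n−e₁) + w₁^E(n−e₁+e₃) − w₁^E(n−e₁−e₃)` and the
analogous identity for `w₃^H`. -/

/-- Support lemma: all components of the special solution vanish outside the
cone `|n₂ - p| ≤ n₁`. -/
lemma special_supp (V : Pot) (τ : ℝ) (p : ℤ) (w : Fam) (hw : SpecialSol V τ p w) :
    ∀ k : ℕ, ∀ a b c : ℤ, a = (k : ℤ) - 1 → (a < b - p ∨ a < p - b) →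
      (w.E2 (a, b, c) = 0 ∧ w.E3 (a, b, c) = 0 ∧ w.H2 (a, b, c) = 0 ∧ w.H3 (a, b, c) = 0) ∧
      (0 ≤ a → w.E1 (a, b, c) = 0 ∧ w.H1 (a, b, c) = 0) := by
  obtain ⟨hbd, hzero, hrec⟩ := hw
  intro k
  induction k using Nat.strong_induction_on with
  | _ k ih =>
    rcases k with _ | _ | k
    · intro a b c ha _
      have := hbd (a, b, c) (by simpa using ha)
      exact ⟨⟨this.1, this.2.1, this.2.2.1, this.2.2.2⟩, fun h => by omega⟩
    · intro a b c ha hQ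
      have ha0 : a = 0 := by push_cast at ha; omega
      subst ha0
      have hb : b ≠ p := by omega
      have hph : ph τ p ((0 : ℤ), b, c) = 0 := by
        simp [ph, hb]
      have := hzero ((0 : ℤ), b, c) rfl
      refine ⟨⟨?_, this.2.2.2.2.1, ?_, this.2.2.2.2.2⟩, fun _ => ⟨?_, ?_⟩⟩
      · rw [this.2.2.2.1, hph]
      · rw [this.2.1, hph, neg_zero]
      · rw [this.2.2.1, hph, neg_zero]
      · rw [this.1, hph]
    · intro a b c ha hQ
      have ha1 : a = (k : ℤ) + 1 := by push_cast at ha; omega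
      subst ha1
      set K : ℤ := (k : ℤ) with hK
      have ih1 : ∀ b' c' : ℤ, (K < b' - p ∨ K < p - b') →
          (w.E2 (K, b', c') = 0 ∧ w.E3 (K, b', c') = 0 ∧ w.H2 (K, b', c') = 0 ∧
            w.H3 (K, b', c') = 0) ∧
          (w.E1 (K, b', c') = 0 ∧ w.H1 (K, b', c') = 0) := by
        intro b' c' h'
        have := ih (k + 1) (by omega) K b' c' (by push_cast; ring) h'
        exact ⟨this.1, this.2 (by positivity)⟩
      have ih0 : ∀ b' c' : ℤ, (K - 1 < b' - p ∨ K - 1 < p - b') →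
          (w.E2 (K - 1, b', c') = 0 ∧ w.E3 (K - 1, b', c') = 0 ∧ w.H2 (K - 1, b', c') = 0 ∧
            w.H3 (K - 1, b', c') = 0) := by
        intro b' c' h'
        exact (ih k (by omega) (K - 1) b' c' (by push_cast; ring) h').1
      have A0 := ih1 b c (by omega)
      have Ap := ih1 (b + 1) c (by omega)
      have Am := ih1 (b - 1) c (by omega)
      have Acp := ih1 b (c + 1) (by omega)
      have Acm := ih1 b (c - 1) (by omega)
      have B0 := ih0 b c (by omega)
      have Bp := ih0 (b + 1) c (by omega)
      have Bm := ih0 (b - 1) c (by omega)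
      have Bcp := ih0 b (c + 1) (by omega)
      have Bcm := ih0 b (c - 1) (by omega)
      have hreq := hrec (K, b, c) (by exact Int.natCast_nonneg k)
      obtain ⟨⟨k1, k2, k3, k4⟩, k5, k6⟩ := hreq
      unfold eqR1 at k1; unfold eqR2 at k2; unfold eqR3 at k3; unfold eqR4 at k4
      unfold eqR5 at k5; unfold eqR6 at k6
      simp only [e1, e2, e3, Prod.mk_add_mk, Prod.mk_sub_mk, add_zero, sub_zero]
        at k1 k2 k3 k4 k5 k6
      rw [A0.1.2.2.2, Ap.2.1, Am.2.1, B0.1] at k1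
      rw [A0.1.2.2.1, Acp.2.1, Acm.2.1, B0.2.1] at k2
      rw [A0.1.2.1, Ap.2.2, Am.2.2, B0.2.2.1] at k3
      rw [A0.1.1, Acp.2.2, Acm.2.2, B0.2.2.2] at k4
      rw [Ap.1.1, Am.1.1, Acp.1.2.1, Acm.1.2.1, Bp.2.2.2, Bm.2.2.2, Bcp.2.2.1, Bcm.2.2.1] at k5
      rw [Ap.1.2.2.1, Am.1.2.2.1, Acp.1.2.2.2, Acm.1.2.2.2, Bp.2.1, Bm.2.1,
        Bcp.1, Bcm.1] at k6
      simp only [mul_zero, zero_mul, add_zero, zero_add, sub_zero, zero_sub, neg_zero,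
        sub_self] at k1 k2 k3 k4 k5 k6
      exact ⟨⟨k1, k2, k3, k4⟩, fun _ => ⟨k5, k6⟩⟩

theorem statement14 (R : Z3) (hR : 1 ≤ R.1 ∧ 1 ≤ R.2.1 ∧ 1 ≤ R.2.2)
    (V : Pot) (hV : PotAdm (Omega R) V) (τ : ℝ) (hτ : 0 < τ) (p : ℤ)
    (w : Fam) (hw : SpecialSol V τ p w) :
    ∀ n ∈ Ezero (p + 1), 1 ≤ n.1 →
      w.E3 n = -(2 * Complex.I * V.H2 (n - e1) * w.H2 (n - e1))
          + w.E1 (n - e1 + e3) - w.E1 (n - e1 - e3) ∧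
      w.H3 n = 2 * Complex.I * V.E2 (n - e1) * w.E2 (n - e1)
          + w.H1 (n - e1 + e3) - w.H1 (n - e1 - e3) := by
  rintro ⟨a, b, c⟩ hn h1
  simp only [Ezero, Set.mem_setOf_eq] at hn
  simp only at h1
  -- the extra term in (R2)/(R4) vanishes by the support lemma
  have hz := special_supp V τ p w hw (a - 1).toNat (a - 2) b c (by omega) (Or.inr (by omega))
  have hreq := hw.2.2 ((a - 1 : ℤ), b, c) (by simpa using by omega)
  obtain ⟨⟨_, k2, _, k4⟩, _, _⟩ := hreq
  unfold eqR2 at k2; unfold eqR4 at k4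
  simp only [e1, e3, Prod.mk_add_mk, Prod.mk_sub_mk, add_zero, sub_zero] at k2 k4
  rw [show (a : ℤ) - 1 + 1 = a from by ring, show (a : ℤ) - 1 - 1 = a - 2 from by ring,
    hz.1.2.1, add_zero] at k2
  rw [show (a : ℤ) - 1 + 1 = a from by ring, show (a : ℤ) - 1 - 1 = a - 2 from by ring,
    hz.1.2.2.2, add_zero] at k4
  constructor
  · simp only [e1, e3, Prod.mk_sub_mk, Prod.mk_add_mk, add_zero, sub_zero]
    exact k2
  · simp only [e1, e3, Prod.mk_sub_mk, Prod.mk_add_mk, add_zero, sub_zero]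
    exact k4
end

section
/- Let V be an admissible potential on Ω (extended by I₆ off Ω) and p ∈ ℤ. Then there exists τ₀ > 0 such that for every τ > τ₀, the special solution w (constructed from V, p, τ) satisfies w₃^E(n) ≠ 0 and w₃^H(n) ≠ 0 for every n ∈ E₀(p+1) ∩ Ω. -/
/-! Statement 18 (Corollary 2.7 (2)): for `τ` large enough, `w₃^{E/H}` does not
vanish on `E₀(p+1) ∩ Ω`. -/

@[simp] lemma pa1 (x y z : ℤ) : ((x,y,z) : Z3) + e1 = (x+1, y, z) := by simp [e1, Prod.ext_iff]
@[simp] lemma pa2 (x y z : ℤ) : ((x,y,z) : Z3) + e2 = (x, y+1, z) := by simp [e2, Prod.ext_iff]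
@[simp] lemma pa3 (x y z : ℤ) : ((x,y,z) : Z3) + e3 = (x, y, z+1) := by simp [e3, Prod.ext_iff]
@[simp] lemma pm1 (x y z : ℤ) : ((x,y,z) : Z3) - e1 = (x-1, y, z) := by simp [e1, Prod.ext_iff]
@[simp] lemma pm2 (x y z : ℤ) : ((x,y,z) : Z3) - e2 = (x, y-1, z) := by simp [e2, Prod.ext_iff]
@[simp] lemma pm3 (x y z : ℤ) : ((x,y,z) : Z3) - e3 = (x, y, z-1) := by simp [e3, Prod.ext_iff]

/-- All components of the special solution vanish on `{n₁ + n₂ < p}`. -/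
lemma vanish {V : Pot} {τ : ℝ} {p : ℤ} {w : Fam} (hw : SpecialSol V τ p w) :
    ∀ k : ℕ, ∀ x y z : ℤ, x = (k : ℤ) - 1 → x + y < p →
      (w.E2 (x,y,z) = 0 ∧ w.E3 (x,y,z) = 0 ∧ w.H2 (x,y,z) = 0 ∧ w.H3 (x,y,z) = 0) ∧
      (0 ≤ x → w.E1 (x,y,z) = 0 ∧ w.H1 (x,y,z) = 0) := by
  intro k
  induction k using Nat.strong_induction_on with
  | _ k IH =>
    intro x y z hx hxy
    match k, hx with
    | 0, hx =>
      have hx' : x = -1 := by omega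
      subst hx'
      refine ⟨hw.1 (-1,y,z) rfl, ?_⟩
      intro h0; omega
    | 1, hx =>
      have hx' : x = 0 := by omega
      subst hx'
      have h := hw.2.1 (0,y,z) rfl
      have hph : ph τ p (0,y,z) = 0 := by
        simp only [ph]
        have : y ≠ p := by omega
        simp [this]
      rw [hph] at h
      refine ⟨⟨h.2.2.2.1, h.2.2.2.2.1, by simpa using h.2.1, h.2.2.2.2.2⟩,
        fun _ => ⟨by simpa using h.2.2.1, h.1⟩⟩
    | (j+2), hx =>
      -- x = j + 1 ≥ 1
      have hxj : x = (j : ℤ) + 1 := by push_cast at hx ⊢; omega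
      have hreq := hw.2.2 (x-1, y, z) (by simp; omega)
      obtain ⟨⟨h1, h2, h3, h4⟩, h5, h6⟩ := hreq
      -- IH at levels j+1 (first coord x-1) and j (first coord x-2)
      have IH1 := IH (j+1) (by omega)
      have IH0 := IH j (by omega)
      have hc1 : x - 1 = ((j+1 : ℕ) : ℤ) - 1 := by push_cast; omega
      have hc0 : x - 1 - 1 = ((j : ℕ) : ℤ) - 1 := by push_cast; omega
      -- vanishing facts used below
      have vE1p2 := (IH1 (x-1) (y+1) z hc1 (by omega)).2 (by omega)
      have vE1m2 := (IH1 (x-1) (y-1) z hc1 (by omega)).2 (by omega)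
      have vE1p3 := (IH1 (x-1) y (z+1) hc1 (by omega)).2 (by omega)
      have vE1m3 := (IH1 (x-1) y (z-1) hc1 (by omega)).2 (by omega)
      have v1 := (IH1 (x-1) y z hc1 (by omega)).1
      have v1E1 := (IH1 (x-1) y z hc1 (by omega)).2 (by omega)
      have v0 := fun (y' z' : ℤ) (h : x - 1 - 1 + y' < p) => (IH0 (x-1-1) y' z' hc0 h).1
      constructor
      · refine ⟨?_, ?_, ?_, ?_⟩
        · -- E2 via R1
          rw [eqR1] at h1
          simp only [pa1, pa2, pm1, pm2] at h1
          rw [show x - 1 + 1 = x by ring] at h1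
          rw [h1, v1.2.2.2, vE1p2.1, vE1m2.1, (v0 y z (by omega)).1]
          ring
        · -- E3 via R2
          rw [eqR2] at h2
          simp only [pa1, pa3, pm1, pm3] at h2
          rw [show x - 1 + 1 = x by ring] at h2
          rw [h2, v1.2.2.1, vE1p3.1, vE1m3.1, (v0 y z (by omega)).2.1]
          ring
        · -- H2 via R3
          rw [eqR3] at h3
          simp only [pa1, pa2, pm1, pm2] at h3
          rw [show x - 1 + 1 = x by ring] at h3
          rw [h3, v1.2.1, vE1p2.2, vE1m2.2, (v0 y z (by omega)).2.2.1]
          ring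
        · -- H3 via R4
          rw [eqR4] at h4
          simp only [pa1, pa3, pm1, pm3] at h4
          rw [show x - 1 + 1 = x by ring] at h4
          rw [h4, v1.1, vE1p3.2, vE1m3.2, (v0 y z (by omega)).2.2.2]
          ring
      · intro _
        constructor
        · -- E1 via R5
          rw [eqR5] at h5
          simp only [pa1, pa2, pa3, pm1, pm2, pm3] at h5
          rw [show x - 1 + 1 = x by ring] at h5
          have e2p := (IH1 (x-1) (y+1) z hc1 (by omega)).1.1
          have e2m := (IH1 (x-1) (y-1) z hc1 (by omega)).1.1
          have e3p := (IH1 (x-1) y (z+1) hc1 (by omega)).1.2.1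
          have e3m := (IH1 (x-1) y (z-1) hc1 (by omega)).1.2.1
          rw [h5, e2p, e2m, e3p, e3m,
            (v0 (y+1) z (by omega)).2.2.2, (v0 (y-1) z (by omega)).2.2.2,
            (v0 y (z+1) (by omega)).2.2.1, (v0 y (z-1) (by omega)).2.2.1]
          ring
        · -- H1 via R6
          rw [eqR6] at h6
          simp only [pa1, pa2, pa3, pm1, pm2, pm3] at h6
          rw [show x - 1 + 1 = x by ring] at h6
          have h2p := (IH1 (x-1) (y+1) z hc1 (by omega)).1.2.2.1
          have h2m := (IH1 (x-1) (y-1) z hc1 (by omega)).1.2.2.1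
          have h3p := (IH1 (x-1) y (z+1) hc1 (by omega)).1.2.2.2
          have h3m := (IH1 (x-1) y (z-1) hc1 (by omega)).1.2.2.2
          rw [h6, h2p, h2m, h3p, h3m,
            (v0 (y+1) z (by omega)).2.1, (v0 (y-1) z (by omega)).2.1,
            (v0 y (z+1) (by omega)).1, (v0 y (z-1) (by omega)).1]
          ring

/-- The one-step ratio `V₂(k-1, p-k+1, z) / V₁(k, p-k, z)`. -/
noncomputable def rat (V2 V1 : Z3 → ℂ) (p : ℤ) (k : ℕ) (z : ℤ) : ℂ :=
  V2 ((k:ℤ) - 1, p - (k:ℤ) + 1, z) / V1 ((k:ℤ), p - (k:ℤ), z)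

/-- `(α, β)` coefficients along the diagonal. -/
noncomputable def abf (f : ℕ → ℤ → ℂ) : ℕ → ℤ → ℂ × ℂ
  | 0, _ => (1, -1)
  | (k+1), z => (-(f (k+1) z) * (abf f k z).2, (abf f k z).1)

lemma abf_ne {f : ℕ → ℤ → ℂ} (hf : ∀ k z, f k z ≠ 0) (k : ℕ) (z : ℤ) :
    (abf f k z).1 ≠ 0 ∧ (abf f k z).2 ≠ 0 := by
  induction k with
  | zero => norm_num [abf]
  | succ k ih =>
    exact ⟨mul_ne_zero (neg_ne_zero.2 (hf (k+1) z)) ih.2, ih.1⟩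

/-- `V` entries are globally nonzero. -/
lemma pot_ne {S : Set Z3} {V : Pot} (hV : PotAdm S V) (n : Z3) :
    V.E1 n ≠ 0 ∧ V.E2 n ≠ 0 ∧ V.E3 n ≠ 0 ∧ V.H1 n ≠ 0 ∧ V.H2 n ≠ 0 ∧ V.H3 n ≠ 0 := by
  by_cases h : n ∈ S
  · exact hV.1 n h
  · have := hV.2 n h
    refine ⟨?_, ?_, ?_, ?_, ?_, ?_⟩ <;> simp [this.1, this.2.1, this.2.2.1, this.2.2.2.1,
      this.2.2.2.2.1, this.2.2.2.2.2]

/-- Values of the special solution on the diagonal `n₁ + n₂ = p`. -/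
lemma diag {S : Set Z3} {V : Pot} {τ : ℝ} {p : ℤ} {w : Fam}
    (hV : PotAdm S V) (hw : SpecialSol V τ p w) :
    ∀ k : ℕ, ∀ z : ℤ,
      w.E1 ((k:ℤ), p - (k:ℤ), z)
          = -(Complex.I ^ z * (Real.exp (τ * z) : ℂ)) * (abf (rat V.E2 V.E1 p) k z).1 ∧
      w.E2 ((k:ℤ), p - (k:ℤ), z)
          = -(Complex.I ^ z * (Real.exp (τ * z) : ℂ)) * (abf (rat V.E2 V.E1 p) k z).2 ∧
      w.H1 ((k:ℤ), p - (k:ℤ), z)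
          = (Complex.I ^ z * (Real.exp (τ * z) : ℂ)) * (abf (rat V.H2 V.H1 p) k z).1 ∧
      w.H2 ((k:ℤ), p - (k:ℤ), z)
          = (Complex.I ^ z * (Real.exp (τ * z) : ℂ)) * (abf (rat V.H2 V.H1 p) k z).2 := by
  intro k
  induction k with
  | zero =>
    intro z
    have h := hw.2.1 ((0:ℤ), p, z) rfl
    have hph : ph τ p ((0:ℤ), p, z) = Complex.I ^ z * (Real.exp (τ * z) : ℂ) := by
      simp [ph]
    simp only [abf, Nat.cast_zero, sub_zero]
    refine ⟨by rw [h.2.2.1, hph]; ring, by rw [h.2.2.2.1, hph]; ring,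
      by rw [h.1, hph]; ring, by rw [h.2.1, hph]; ring⟩
  | succ k ih =>
    intro z
    set g : ℤ → ℂ := fun z' => Complex.I ^ z' * (Real.exp (τ * z') : ℂ) with hg
    have hreq := hw.2.2 ((k:ℤ), p - (k:ℤ) - 1, z) (by simp)
    obtain ⟨⟨h1, _, h3, _⟩, h5, h6⟩ := hreq
    simp only [eqR1, eqR3, eqR5, eqR6, pa1, pa2, pa3, pm1, pm2, pm3] at h1 h3 h5 h6
    -- vanishing facts (points with first-coordinate sum < p)
    have van1 := vanish hw (k+1) (k:ℤ)
    have van0 := vanish hw k ((k:ℤ)-1)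
    have hcast1 : (k:ℤ) = ((k+1 : ℕ) : ℤ) - 1 := by push_cast; ring
    have hcast0 : (k:ℤ) - 1 = ((k : ℕ) : ℤ) - 1 := by ring
    have vH3 := (van1 (p - (k:ℤ) - 1) z hcast1 (by omega)).1.2.2.2
    have vE1m2 := (van1 (p - (k:ℤ) - 2) z hcast1 (by omega)).2 (by positivity)
    have vE2m1 := (van0 (p - (k:ℤ) - 1) z hcast0 (by omega)).1
    have vE3p := (van1 (p - (k:ℤ) - 1) (z+1) hcast1 (by omega)).1.2.1
    have vE3m := (van1 (p - (k:ℤ) - 1) (z-1) hcast1 (by omega)).1.2.1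
    have vE2m2 := (van1 (p - (k:ℤ) - 2) z hcast1 (by omega)).1.1
    have vH3m1 := (van0 (p - (k:ℤ)) z hcast0 (by omega)).1.2.2.2
    have vH2p := (van0 (p - (k:ℤ) - 1) (z+1) hcast0 (by omega)).1.2.2.1
    have vH2m := (van0 (p - (k:ℤ) - 1) (z-1) hcast0 (by omega)).1.2.2.1
    have vH3mm := (van0 (p - (k:ℤ) - 2) z hcast0 (by omega)).1.2.2.2
    have vE3v := (van1 (p - (k:ℤ) - 1) z hcast1 (by omega)).1.2.1
    have vE3mm := (van0 (p - (k:ℤ) - 2) z hcast0 (by omega)).1.2.1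
    have vH1m2 := (van1 (p - (k:ℤ) - 2) z hcast1 (by omega)).2 (by positivity)
    have vH2m1 := (van0 (p - (k:ℤ) - 1) z hcast0 (by omega)).1.2.2.1
    have vH2m2 := (van1 (p - (k:ℤ) - 2) z hcast1 (by omega)).1.2.2.1
    have vH3p := (van1 (p - (k:ℤ) - 1) (z+1) hcast1 (by omega)).1.2.2.2
    have vH3m := (van1 (p - (k:ℤ) - 1) (z-1) hcast1 (by omega)).1.2.2.2
    have vE3m1 := (van0 (p - (k:ℤ)) z hcast0 (by omega)).1.2.1
    have vE2p := (van0 (p - (k:ℤ) - 1) (z+1) hcast0 (by omega)).1.1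
    have vE2m := (van0 (p - (k:ℤ) - 1) (z-1) hcast0 (by omega)).1.1
    have hd := ih z
    have hdiagpt : (p : ℤ) - (k:ℤ) - 1 + 1 = p - (k:ℤ) := by ring
    rw [hdiagpt] at h1 h3 h5 h6
    rw [show p - (k:ℤ) - 1 - 1 = p - (k:ℤ) - 2 by ring] at h1 h3 h5 h6
    have hVE1 := (pot_ne hV ((k:ℤ)+1, p - (k:ℤ) - 1, z)).1
    have hVH1 := (pot_ne hV ((k:ℤ)+1, p - (k:ℤ) - 1, z)).2.2.2.1
    have hpt : ∀ c : ℤ, (((k+1:ℕ):ℤ), p - ((k+1:ℕ):ℤ), c) = ((k:ℤ)+1, p - (k:ℤ) - 1, c) := by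
      intro c; push_cast; norm_num; ring
    have hrat1 : rat V.E2 V.E1 p (k+1) z
        = V.E2 ((k:ℤ), p - (k:ℤ), z) / V.E1 ((k:ℤ)+1, p - (k:ℤ) - 1, z) := by
      simp only [rat]; push_cast
      norm_num
      congr 2 <;> try ring_nf
    have hrat2 : rat V.H2 V.H1 p (k+1) z
        = V.H2 ((k:ℤ), p - (k:ℤ), z) / V.H1 ((k:ℤ)+1, p - (k:ℤ) - 1, z) := by
      simp only [rat]; push_cast
      norm_num
      congr 2 <;> try ring_nf
    refine ⟨?_, ?_, ?_, ?_⟩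
    · -- E1 via R5
      rw [hpt z, h5, vE3p, vE3m, vE2m2, vH3m1, vH3mm, vH2p, vH2m, hd.2.1]
      simp only [abf, hrat1]
      field_simp
      ring
    · -- E2 via R1
      rw [hpt z, h1, vH3, vE1m2.1, vE2m1.1, hd.1]
      simp only [abf]
      ring
    · -- H1 via R6
      rw [hpt z, h6, vH3p, vH3m, vH2m2, vE3m1, vE3mm, vE2p, vE2m, hd.2.2.2]
      simp only [abf, hrat2]
      field_simp
      ring
    · -- H2 via R3
      rw [hpt z, h3, vE3v, vH1m2.2, vH2m1, hd.2.2.1]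
      simp only [abf]
      ring

/-- Key estimate: a sum `b + eᵗa + e⁻ᵗc` with dominant middle term is nonzero. -/
lemma combo_ne (a b c : ℂ) (et emt B q : ℝ) (hq : 0 < q) (hqa : q ≤ ‖a‖)
    (het : 0 ≤ et) (hemt : 0 ≤ emt)
    (hB : ‖b‖ + emt * ‖c‖ ≤ B) (hgt : B + 1 < et * q) :
    b + (et : ℂ) * a + (emt : ℂ) * c ≠ 0 := by
  intro h0
  have h1 : (et : ℂ) * a = -b - (emt : ℂ) * c := by linear_combination h0
  have h2 : ‖(et : ℂ) * a‖ ≤ ‖b‖ + ‖(emt : ℂ) * c‖ := by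
    rw [h1]
    exact (norm_sub_le _ _).trans (by rw [norm_neg])
  rw [norm_mul, norm_mul, Complex.norm_real, Complex.norm_real, Real.norm_eq_abs,
    Real.norm_eq_abs, abs_of_nonneg het, abs_of_nonneg hemt] at h2
  nlinarith [norm_nonneg a, norm_nonneg b, norm_nonneg c,
    mul_le_mul_of_nonneg_left hqa het]

theorem statement18 (R : Z3) (hR : 1 ≤ R.1 ∧ 1 ≤ R.2.1 ∧ 1 ≤ R.2.2)
    (V : Pot) (hV : PotAdm (Omega R) V) (p : ℤ) :
    ∃ τ0 : ℝ, 0 < τ0 ∧ ∀ τ : ℝ, τ0 < τ →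
      ∀ w : Fam, SpecialSol V τ p w →
        ∀ n ∈ Ezero (p + 1) ∩ Omega R, w.E3 n ≠ 0 ∧ w.H3 n ≠ 0 := by
  have hne := pot_ne hV
  set fE := rat V.E2 V.E1 p with hfE
  set fH := rat V.H2 V.H1 p with hfH
  have hfEne : ∀ k z, fE k z ≠ 0 := fun k z => div_ne_zero (hne _).2.1 (hne _).1
  have hfHne : ∀ k z, fH k z ≠ 0 := fun k z =>
    div_ne_zero (hne _).2.2.2.2.1 (hne _).2.2.2.1
  -- bounds and gaps
  set B : ℤ → ℤ → ℝ := fun m z =>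
    (2 * ‖V.H2 (m-1, p+1-m, z)‖ * ‖(abf fH (m-1).toNat z).2‖
      + 2 * ‖V.E2 (m-1, p+1-m, z)‖ * ‖(abf fE (m-1).toNat z).2‖)
    + (‖(abf fE (m-1).toNat (z-1)).1‖ + ‖(abf fH (m-1).toNat (z-1)).1‖) with hB
  set q : ℤ → ℤ → ℝ := fun m z =>
    min ‖(abf fE (m-1).toNat (z+1)).1‖ ‖(abf fH (m-1).toNat (z+1)).1‖ with hq
  set g : ℤ → ℤ → ℝ := fun m z => Real.log ((B m z + 1) / q m z) with hg
  have hqpos : ∀ m z, 0 < q m z := fun m z =>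
    lt_min (norm_pos_iff.2 (abf_ne hfEne _ _).1) (norm_pos_iff.2 (abf_ne hfHne _ _).1)
  have hBpos : ∀ m z, 0 ≤ B m z := by
    intro m z; simp only [hB]; positivity
  refine ⟨1 + ∑ mz ∈ Finset.Icc (1:ℤ) R.1 ×ˢ Finset.Icc (1:ℤ) R.2.2,
    max 0 (g mz.1 mz.2), by positivity, ?_⟩
  intro τ hτ w hw n hn
  obtain ⟨m, y, z⟩ := n
  obtain ⟨hE0, hΩ⟩ := hn
  have hE0' : m + y = p + 1 := hE0
  have hyv : y = p + 1 - m := by omega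
  subst hyv
  obtain ⟨hm1, hmR, hy1, hyR, hz1, hzR⟩ := hΩ
  simp only at hm1 hmR hy1 hyR hz1 hzR
  -- the exponent bound at (m, z)
  have hmem : ((m, z) : ℤ × ℤ) ∈ Finset.Icc (1:ℤ) R.1 ×ˢ Finset.Icc (1:ℤ) R.2.2 := by
    simp [Finset.mem_product, Finset.mem_Icc]; omega
  have hsum : max 0 (g m z) ≤ ∑ mz ∈ Finset.Icc (1:ℤ) R.1 ×ˢ Finset.Icc (1:ℤ) R.2.2,
      max 0 (g mz.1 mz.2) :=
    Finset.single_le_sum (fun i _ => le_max_left 0 (g i.1 i.2)) hmem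
  have hτg : g m z < τ := by
    have := le_max_right 0 (g m z)
    linarith
  have hτ0 : 0 < τ := by
    have := le_max_left 0 (g m z)
    linarith
  have hexp : B m z + 1 < Real.exp τ * q m z := by
    have h1 : (B m z + 1) / q m z < Real.exp τ := by
      have hb := hBpos m z
      have hqq := hqpos m z
      calc (B m z + 1) / q m z = Real.exp (g m z) :=
            (Real.exp_log (by positivity)).symm
        _ < Real.exp τ := Real.exp_lt_exp.2 hτg
    rw [div_lt_iff₀ (hqpos m z)] at h1
    linarith
  -- set up indices
  set k : ℕ := (m - 1).toNat with hkdef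
  have hk : (k : ℤ) = m - 1 := Int.toNat_of_nonneg (by omega)
  have hy : (p+1-m) = p - (k : ℤ) := by omega
  have hdg := diag hV hw
  have hptE : ∀ c : ℤ, ((m:ℤ) - 1, (p+1-m), c) = (((k:ℤ)), p - (k:ℤ), c) := by
    intro c; rw [hy, hk]
  -- values entering the recursions
  have hH2v : w.H2 (m - 1, (p+1-m), z)
      = (Complex.I ^ z * (Real.exp (τ * z) : ℂ)) * (abf fH k z).2 := by
    rw [hptE z]; exact (hdg k z).2.2.2
  have hE2v : w.E2 (m - 1, (p+1-m), z)
      = -(Complex.I ^ z * (Real.exp (τ * z) : ℂ)) * (abf fE k z).2 := by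
    rw [hptE z]; exact (hdg k z).2.1
  have hE1p : w.E1 (m - 1, (p+1-m), z + 1)
      = -(Complex.I ^ (z+1) * (Real.exp (τ * (z+1)) : ℂ)) * (abf fE k (z+1)).1 := by
    rw [hptE (z+1)]; exact_mod_cast (hdg k (z+1)).1
  have hE1m : w.E1 (m - 1, (p+1-m), z - 1)
      = -(Complex.I ^ (z-1) * (Real.exp (τ * (z-1)) : ℂ)) * (abf fE k (z-1)).1 := by
    rw [hptE (z-1)]; exact_mod_cast (hdg k (z-1)).1
  have hH1p : w.H1 (m - 1, (p+1-m), z + 1)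
      = (Complex.I ^ (z+1) * (Real.exp (τ * (z+1)) : ℂ)) * (abf fH k (z+1)).1 := by
    rw [hptE (z+1)]; exact_mod_cast (hdg k (z+1)).2.2.1
  have hH1m : w.H1 (m - 1, (p+1-m), z - 1)
      = (Complex.I ^ (z-1) * (Real.exp (τ * (z-1)) : ℂ)) * (abf fH k (z-1)).1 := by
    rw [hptE (z-1)]; exact_mod_cast (hdg k (z-1)).2.2.1
  have hE3v : w.E3 (m - 2, (p+1-m), z) = 0 :=
    (vanish hw k (m-2) (p+1-m) z (by omega) (by omega)).1.2.1
  have hH3v : w.H3 (m - 2, (p+1-m), z) = 0 :=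
    (vanish hw k (m-2) (p+1-m) z (by omega) (by omega)).1.2.2.2
  -- the recursion equations R2 and R4 at (m-1, (p+1-m), z)
  have hreq := hw.2.2 (m - 1, (p+1-m), z) (by simp; omega)
  have h2 := hreq.1.2.1
  have h4 := hreq.1.2.2.2
  rw [eqR2] at h2
  rw [eqR4] at h4
  simp only [pa1, pa3, pm1, pm3] at h2 h4
  rw [show m - 1 + 1 = m by ring, show m - 1 - 1 = m - 2 by ring] at h2 h4
  rw [hH2v, hE1p, hE1m, hE3v] at h2
  rw [hE2v, hH1p, hH1m, hH3v] at h4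
  -- power and exponential identities
  have hI1 : Complex.I ^ (z + 1) = Complex.I ^ z * Complex.I :=
    zpow_add_one₀ Complex.I_ne_zero z
  have hI2 : Complex.I ^ (z - 1) = Complex.I ^ z * Complex.I⁻¹ :=
    zpow_sub_one₀ Complex.I_ne_zero z
  have hex1 : Real.exp (τ * ((z : ℝ) + 1)) = Real.exp (τ * z) * Real.exp τ := by
    rw [← Real.exp_add]; ring_nf
  have hex2 : Real.exp (τ * ((z : ℝ) - 1)) = Real.exp (τ * z) * Real.exp (-τ) := by
    rw [← Real.exp_add]; ring_nf
  rw [hI1, hI2, Complex.inv_I, hex1, hex2, Complex.ofReal_mul,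
    Complex.ofReal_mul] at h2 h4
  -- the dominant-term expressions
  have hXne : 2 * V.H2 (m - 1, (p+1-m), z) * (abf fH k z).2
      + (Real.exp τ : ℂ) * (abf fE k (z+1)).1
      + (Real.exp (-τ) : ℂ) * (abf fE k (z-1)).1 ≠ 0 := by
    apply combo_ne _ _ _ _ _ (B m z) (q m z) (hqpos m z)
    · have h := min_le_left ‖(abf fE (m-1).toNat (z+1)).1‖ ‖(abf fH (m-1).toNat (z+1)).1‖
      simpa [hq, hkdef] using h
    · positivity
    · positivity
    · have h1 : ‖(2 : ℂ) * V.H2 (m - 1, (p+1-m), z) * (abf fH k z).2‖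
          = 2 * ‖V.H2 (m-1, p+1-m, z)‖ * ‖(abf fH (m-1).toNat z).2‖ := by
        rw [norm_mul, norm_mul]
        norm_num [hkdef]
      rw [h1]
      have h2' : Real.exp (-τ) * ‖(abf fE k (z-1)).1‖ ≤ ‖(abf fE (m-1).toNat (z-1)).1‖ := by
        have : Real.exp (-τ) ≤ 1 := Real.exp_le_one_iff.2 (by linarith)
        have hn := norm_nonneg (abf fE (m-1).toNat (z-1)).1
        rw [hkdef]
        nlinarith
      simp only [hB]
      nlinarith [norm_nonneg (V.E2 (m-1, p+1-m, z)), norm_nonneg (abf fE (m-1).toNat z).2,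
        norm_nonneg (abf fH (m-1).toNat (z-1)).1]
    · exact hexp
  have hYne : -(2 * V.E2 (m - 1, (p+1-m), z) * (abf fE k z).2)
      + (Real.exp τ : ℂ) * (abf fH k (z+1)).1
      + (Real.exp (-τ) : ℂ) * (abf fH k (z-1)).1 ≠ 0 := by
    apply combo_ne _ _ _ _ _ (B m z) (q m z) (hqpos m z)
    · have h := min_le_right ‖(abf fE (m-1).toNat (z+1)).1‖ ‖(abf fH (m-1).toNat (z+1)).1‖
      simpa [hq, hkdef] using h
    · positivity
    · positivity
    · have h1 : ‖-((2 : ℂ) * V.E2 (m - 1, (p+1-m), z) * (abf fE k z).2)‖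
          = 2 * ‖V.E2 (m-1, p+1-m, z)‖ * ‖(abf fE (m-1).toNat z).2‖ := by
        rw [norm_neg, norm_mul, norm_mul]
        norm_num [hkdef]
      rw [h1]
      have h2' : Real.exp (-τ) * ‖(abf fH k (z-1)).1‖ ≤ ‖(abf fH (m-1).toNat (z-1)).1‖ := by
        have : Real.exp (-τ) ≤ 1 := Real.exp_le_one_iff.2 (by linarith)
        have hn := norm_nonneg (abf fH (m-1).toNat (z-1)).1
        rw [hkdef]
        nlinarith
      simp only [hB]
      nlinarith [norm_nonneg (V.H2 (m-1, p+1-m, z)), norm_nonneg (abf fH (m-1).toNat z).2,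
        norm_nonneg (abf fE (m-1).toNat (z-1)).1]
    · exact hexp
  have hIne : Complex.I ^ z ≠ 0 := zpow_ne_zero z Complex.I_ne_zero
  have hEne : ((Real.exp (τ * z) : ℝ) : ℂ) ≠ 0 := by
    exact_mod_cast Real.exp_ne_zero _
  constructor
  · -- E component
    have key : w.E3 (m, (p+1-m), z) = -(Complex.I ^ z * Complex.I) * (Real.exp (τ * z) : ℂ) *
        (2 * V.H2 (m - 1, (p+1-m), z) * (abf fH k z).2
          + (Real.exp τ : ℂ) * (abf fE k (z+1)).1
          + (Real.exp (-τ) : ℂ) * (abf fE k (z-1)).1) := by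
      rw [h2]; push_cast; ring
    rw [key]
    exact mul_ne_zero (mul_ne_zero (neg_ne_zero.2 (mul_ne_zero hIne Complex.I_ne_zero)) hEne)
      hXne
  · -- H component
    have key : w.H3 (m, (p+1-m), z) = (Complex.I ^ z * Complex.I) * (Real.exp (τ * z) : ℂ) *
        (-(2 * V.E2 (m - 1, (p+1-m), z) * (abf fE k z).2)
          + (Real.exp τ : ℂ) * (abf fH k (z+1)).1
          + (Real.exp (-τ) : ℂ) * (abf fH k (z-1)).1) := by
      rw [h4]; push_cast; ring
    rw [key]
    exact mul_ne_zero (mul_ne_zero (mul_ne_zero hIne Complex.I_ne_zero) hEne) hYne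
end
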